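/- For every integer i ≥ 0 one has c_4^{i+1} − c_3^i > 0, where c_3^i = (m*/D)·(k!/P(2k+1))·(P(k+i+1)/i!)·I(2k+2i+2, 2(k+1)l+2) and c_4^{i+1} = (l·m*/D)·((k+1)!/P(2k+1))·(P(k+i+1)/(i+1)!)·I(2k+2i+4, 2kl+2). -/

import Mathlib

/-- The critical value m* = ∏_{j=0}^{k} (2j+1)/(2jl+1). -/
noncomputable def mStar (l k : ℕ) : ℝ :=
  ∏ j ∈ Finset.range (k + 1), (2 * (j : ℝ) + 1) / (2 * (j : ℝ) * (l : ℝ) + 1)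

/-- D = 2(2k+1)l + 2. -/
noncomputable def Dd (l k : ℕ) : ℝ := 2 * (2 * (k : ℝ) + 1) * (l : ℝ) + 2

/-- P(i) = ∏_{j=0}^{i-1} (jl + 1), with P(0) = 1. -/
noncomputable def Pp (l i : ℕ) : ℝ := ∏ j ∈ Finset.range i, ((j : ℝ) * (l : ℝ) + 1)

/-- I(a,b) = (2/l^{(a+1)/2})·Γ((a+1)/2)·Γ((b+1)/(2l))/Γ((a+1)/2 + (b+1)/(2l)),
the value of ∫_0^Ω Sn^a Cs^b dθ for even a, b. -/
noncomputable def Ii (l a b : ℕ) : ℝ :=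
  2 / (l : ℝ) ^ (((a : ℝ) + 1) / 2) * Real.Gamma (((a : ℝ) + 1) / 2) *
    Real.Gamma (((b : ℝ) + 1) / (2 * (l : ℝ))) /
    Real.Gamma (((a : ℝ) + 1) / 2 + ((b : ℝ) + 1) / (2 * (l : ℝ)))

/-! With x = k + i + 3/2 and y = k + 3/(2l), both integrals come from J = I(2k+2i+2, 2kl+2)
through Γ(x+1) = xΓ(x): raising a by 2 multiplies J by x/(l(x+y)), raising b by 2l multiplies
it by y/(x+y). So c₄^{i+1} − c₃ⁱ is a positive multiple of (k+1)x − (i+1)y, which is positive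
because y ≤ k + 3/4 once l ≥ 2. -/

open Real

noncomputable def scaledBeta (L x y : ℝ) : ℝ := 2 / L ^ x * Gamma x * Gamma y / Gamma (x + y)

section scaledBeta

variable {L x y : ℝ}

lemma scaledBeta_pos (hL : 0 < L) (hx : 0 < x) (hy : 0 < y) : 0 < scaledBeta L x y := by
  unfold scaledBeta; positivity

lemma scaledBeta_add_one_left (hL : 0 < L) (hx : 0 < x) (hy : 0 < y) :
    scaledBeta L (x + 1) y = x / (L * (x + y)) * scaledBeta L x y := by
  unfold scaledBeta
  rw [Gamma_add_one hx.ne', add_right_comm, Gamma_add_one (by positivity), rpow_add_one hL.ne']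
  field_simp

lemma scaledBeta_add_one_right (hx : 0 < x) (hy : 0 < y) :
    scaledBeta L x (y + 1) = y / (x + y) * scaledBeta L x y := by
  unfold scaledBeta
  rw [Gamma_add_one hy.ne', ← add_assoc, Gamma_add_one (by positivity)]
  field_simp

end scaledBeta

lemma Ii_eq_scaledBeta (l a b : ℕ) :
    Ii l a b = scaledBeta l ((a + 1) / 2) ((b + 1) / (2 * l)) := rfl

section Ii

variable {l : ℕ} (a b : ℕ)

lemma Ii_pos (hl : 0 < l) : 0 < Ii l a b := by
  rw [Ii_eq_scaledBeta]; exact scaledBeta_pos (by positivity) (by positivity) (by positivity)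

lemma Ii_add_two_left (hl : 0 < l) :
    Ii l (a + 2) b = ((a + 1) / 2) / (l * ((a + 1) / 2 + (b + 1) / (2 * l))) * Ii l a b := by
  rw [Ii_eq_scaledBeta, Ii_eq_scaledBeta, ← scaledBeta_add_one_left (by positivity) (by positivity)
    (by positivity)]
  congr 1
  push_cast; ring

lemma Ii_add_two_mul_right (hl : 0 < l) :
    Ii l a (b + 2 * l) = ((b + 1) / (2 * l)) / ((a + 1) / 2 + (b + 1) / (2 * l)) * Ii l a b := by
  rw [Ii_eq_scaledBeta, Ii_eq_scaledBeta, ← scaledBeta_add_one_right (by positivity) (by positivity)]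
  congr 1
  push_cast; field_simp; ring

end Ii

lemma mStar_pos (l k : ℕ) : 0 < mStar l k := by
  unfold mStar; positivity

lemma Dd_pos (l k : ℕ) : 0 < Dd l k := by
  unfold Dd; positivity

lemma Pp_pos (l i : ℕ) : 0 < Pp l i := by
  unfold Pp; positivity

lemma add_one_mul_lt_add_one_mul_of_two_le {l : ℕ} (hl : 2 ≤ l) (k i : ℕ) :
    ((i : ℝ) + 1) * (k + 3 / (2 * l)) < (k + 1) * (k + i + 3 / 2) := by
  have hl' : (2 : ℝ) ≤ l := by exact_mod_cast hl
  have : 3 / (2 * (l : ℝ)) ≤ 3 / 4 := by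
    rw [div_le_div_iff₀ (by positivity) (by norm_num)]; linarith
  nlinarith [mul_nonneg (Nat.cast_nonneg (α := ℝ) i) (Nat.cast_nonneg (α := ℝ) k),
    mul_le_mul_of_nonneg_left this (by positivity : (0 : ℝ) ≤ i + 1)]

theorem c4_sub_c3_pos_general (l k : ℕ) (hl : 2 ≤ l) (i : ℕ) :
    0 < (l : ℝ) * mStar l k / Dd l k * ((Nat.factorial (k + 1) : ℝ) / Pp l (2 * k + 1)) *
          (Pp l (k + i + 1) / (Nat.factorial (i + 1) : ℝ)) *
          Ii l (2 * k + 2 * i + 4) (2 * k * l + 2) -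
        mStar l k / Dd l k * ((Nat.factorial k : ℝ) / Pp l (2 * k + 1)) *
          (Pp l (k + i + 1) / (Nat.factorial i : ℝ)) *
          Ii l (2 * k + 2 * i + 2) (2 * (k + 1) * l + 2) := by
  have hl0 : 0 < l := by omega
  rw [show 2 * k + 2 * i + 4 = (2 * k + 2 * i + 2) + 2 by ring,
    show 2 * (k + 1) * l + 2 = (2 * k * l + 2) + 2 * l by ring,
    Ii_add_two_left _ _ hl0, Ii_add_two_mul_right _ _ hl0, Nat.factorial_succ, Nat.factorial_succ i]
  set C := mStar l k / Dd l k * ((Nat.factorial k : ℝ) / Pp l (2 * k + 1)) *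
    (Pp l (k + i + 1) / ((Nat.factorial i : ℝ) * (i + 1))) *
    (Ii l (2 * k + 2 * i + 2) (2 * k * l + 2) / (k + i + 3 / 2 + (k + 3 / (2 * l))))
  have hC : 0 < C := by
    have := mStar_pos l k
    have := Dd_pos l k
    have := Pp_pos l (2 * k + 1)
    have := Pp_pos l (k + i + 1)
    have := Ii_pos (2 * k + 2 * i + 2) (2 * k * l + 2) hl0
    positivity
  refine (mul_pos hC (sub_pos.2 (add_one_mul_lt_add_one_mul_of_two_le hl k i))).trans_eq ?_
  simp only [C]
  push_cast
  field_simp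
  ring

/-- Proposition 3.2 (ii): c₄^{i+1} − c₃ⁱ > 0. -/
theorem c4_sub_c3_pos (l k : ℕ) (hl : 2 ≤ l) (hk : 1 ≤ k) (i : ℕ) :
    0 < (l : ℝ) * mStar l k / Dd l k * ((Nat.factorial (k + 1) : ℝ) / Pp l (2 * k + 1)) *
          (Pp l (k + i + 1) / (Nat.factorial (i + 1) : ℝ)) *
          Ii l (2 * k + 2 * i + 4) (2 * k * l + 2) -
        mStar l k / Dd l k * ((Nat.factorial k : ℝ) / Pp l (2 * k + 1)) *
          (Pp l (k + i + 1) / (Nat.factorial i : ℝ)) *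
          Ii l (2 * k + 2 * i + 2) (2 * (k + 1) * l + 2) :=
  c4_sub_c3_pos_general l k hl i
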